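/- Let (X, ω) be a symplectic vector space, (λ, μ) a pair of co-isotropic subspaces with λ₀ := λ^ω ∩ μ^ω finite-dimensional and dim λ₀ = dim X/(λ+μ). Let V be a linear subspace with X = V ⊕ (λ+μ), and set λ₁ := V^ω ∩ λ, μ₁ := V^ω ∩ μ, X₀ := λ₀ + V, X₁ := λ₁ + μ₁. Then: V^ω ⊕ λ₀ = X; X₀ = λ₀ ⊕ V; λ = λ₀ ⊕ λ₁ and μ = λ₀ ⊕ μ₁; X₁ = X₀^ω, X₀ = X₁^ω, X = X₀ ⊕ X₁, and X₀, X₁ are symplectic; λ₀ is a Lagrangian subspace of X₀. -/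
import Mathlib

universe u

/-- The annihilator `λ^ω = {y ∈ X : ω(x,y) = 0 for all x ∈ λ}` of a subspace of a
complex vector space with a sesquilinear form `ω` (linear in the first,
conjugate-linear in the second variable). -/
noncomputable def ann {X : Type*} [AddCommGroup X] [Module ℂ X]
    (ω : X →ₗ[ℂ] X →ₗ⋆[ℂ] ℂ) (l : Submodule ℂ X) : Submodule ℂ X :=
  ⨅ x ∈ l, LinearMap.ker (ω x)

section Aux
variable {X : Type*} [AddCommGroup X] [Module ℂ X] (ω : X →ₗ[ℂ] X →ₗ⋆[ℂ] ℂ)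

theorem mem_ann {l : Submodule ℂ X} {y : X} :
    y ∈ ann ω l ↔ ∀ x ∈ l, ω x y = 0 := by
  simp [ann]

theorem ann_sup (p q : Submodule ℂ X) : ann ω (p ⊔ q) = ann ω p ⊓ ann ω q := by
  ext y
  simp only [Submodule.mem_inf, mem_ann]
  constructor
  · intro h
    exact ⟨fun x hx => h x (Submodule.mem_sup_left hx),
      fun x hx => h x (Submodule.mem_sup_right hx)⟩
  · rintro ⟨h1, h2⟩ x hx
    rcases Submodule.mem_sup.1 hx with ⟨a, ha, b, hb, rfl⟩
    rw [map_add, LinearMap.add_apply, h1 a ha, h2 b hb, add_zero]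

/-- The functional `v ↦ ω v y` on a subspace `W`, `ℂ`-linear in `v`. -/
noncomputable def toDual (W : Submodule ℂ X) (y : X) : Module.Dual ℂ ↥W where
  toFun v := ω v y
  map_add' u v := by simp
  map_smul' c v := by simp

@[simp] theorem toDual_apply (W : Submodule ℂ X) (y : X) (v : ↥W) :
    toDual ω W y v = ω v y := rfl

/-- The real-linear map `λ₀ → (V →ₗ ℂ)`, `a ↦ (v ↦ ω v a)`. -/
noncomputable def Tmap (lam0 V : Submodule ℂ X) : ↥lam0 →ₗ[ℝ] Module.Dual ℂ ↥V where
  toFun a := toDual ω V (a : X)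
  map_add' a b := by ext v; simp
  map_smul' r a := by
    ext v
    show ω v (((r : ℝ) • a : ↥lam0) : X) = ((r : ℝ) • toDual ω V (a : X)) v
    rw [← Complex.coe_smul, ← Complex.coe_smul, Submodule.coe_smul, LinearMap.map_smulₛₗ,
      LinearMap.smul_apply, toDual_apply, Complex.conj_ofReal, smul_eq_mul]

@[simp] theorem Tmap_apply (lam0 V : Submodule ℂ X) (a : ↥lam0) (v : ↥V) :
    Tmap ω lam0 V a v = ω v (a : X) := rfl

end Aux

/-- Natural decomposition of a symplectic vector space induced by a pair
`(λ,μ)` of co-isotropic subspaces with `dim λ₀ = dim X/(λ+μ) < ∞`, where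
`λ₀ = λ^ω ∩ μ^ω`, and a complement `V` of `λ+μ`. With `λ₁ = V^ω ∩ λ`, `μ₁ = V^ω ∩ μ`,
`X₀ = λ₀ + V`, `X₁ = λ₁ + μ₁`: `V^ω ⊕ λ₀ = X`; `X₀ = λ₀ ⊕ V`; `λ = λ₀ ⊕ λ₁`;
`μ = λ₀ ⊕ μ₁`; `X₁ = X₀^ω = V^ω ∩ (λ+μ)`, `X₀ = X₁^ω`, `X = X₀ ⊕ X₁` with `X₀`, `X₁`
symplectic; and `λ₀` is a Lagrangian subspace of `X₀`. -/
theorem natural_decomposition {X : Type*} [AddCommGroup X] [Module ℂ X]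
    (ω : X →ₗ[ℂ] X →ₗ⋆[ℂ] ℂ)
    (hskew : ∀ x y, ω y x = - (starRingEnd ℂ) (ω x y))
    (hnd : ∀ x, (∀ y, ω x y = 0) → x = 0)
    (l m V lam0 lam1 mu1 X₀ X₁ : Submodule ℂ X)
    (hlco : ann ω l ≤ l) (hmco : ann ω m ≤ m)
    (hlam0 : lam0 = ann ω l ⊓ ann ω m)
    [FiniteDimensional ℂ ↥lam0] [FiniteDimensional ℂ (X ⧸ (l ⊔ m))]
    (hdim : Module.finrank ℂ ↥lam0 = Module.finrank ℂ (X ⧸ (l ⊔ m)))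
    (hV : IsCompl V (l ⊔ m))
    (hlam1 : lam1 = ann ω V ⊓ l) (hmu1 : mu1 = ann ω V ⊓ m)
    (hX0 : X₀ = lam0 ⊔ V) (hX1 : X₁ = lam1 ⊔ mu1) :
    IsCompl (ann ω V) lam0 ∧
    lam0 ⊓ V = ⊥ ∧
    (l = lam0 ⊔ lam1 ∧ lam0 ⊓ lam1 = ⊥) ∧
    (m = lam0 ⊔ mu1 ∧ lam0 ⊓ mu1 = ⊥) ∧
    X₁ = ann ω X₀ ∧ X₁ = ann ω V ⊓ (l ⊔ m) ∧ X₀ = ann ω X₁ ∧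
    IsCompl X₀ X₁ ∧
    X₀ ⊓ ann ω X₀ = ⊥ ∧ X₁ ⊓ ann ω X₁ = ⊥ ∧
    (lam0 ≤ X₀ ∧ lam0 = ann ω lam0 ⊓ X₀) := by
  classical
  have flip : ∀ {x y : X}, ω x y = 0 → ω y x = 0 := by
    intro x y h
    rw [hskew x y, h, map_zero, neg_zero]
  have h0 : lam0 = ann ω (l ⊔ m) := by rw [hlam0, ann_sup]
  have hl0l : lam0 ≤ l := hlam0 ▸ inf_le_left.trans hlco
  have hl0lm : lam0 ≤ l ⊔ m := hl0l.trans le_sup_left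
  have hpair : ∀ a ∈ lam0, ∀ x ∈ l ⊔ m, ω x a = 0 := by
    intro a ha x hx
    rw [h0] at ha
    exact (mem_ann ω).1 ha x hx
  have hpair' : ∀ a ∈ lam0, ∀ x ∈ l ⊔ m, ω a x = 0 := fun a ha x hx => flip (hpair a ha x hx)
  -- the whole space decomposes as V + (l ⊔ m)
  have hsplit : ∀ x : X, ∃ v ∈ V, ∃ w ∈ l ⊔ m, x = v + w := by
    intro x
    have hx : x ∈ V ⊔ (l ⊔ m) := by rw [hV.sup_eq_top]; exact Submodule.mem_top
    rcases Submodule.mem_sup.1 hx with ⟨v, hv, w, hw, h⟩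
    exact ⟨v, hv, w, hw, h.symm⟩
  -- finite dimensionality of V
  have eV : (X ⧸ (l ⊔ m)) ≃ₗ[ℂ] ↥V := Submodule.quotientEquivOfIsCompl _ _ hV.symm
  haveI : FiniteDimensional ℂ ↥V := LinearEquiv.finiteDimensional eV
  have hfrV : Module.finrank ℂ ↥V = Module.finrank ℂ ↥lam0 := by
    rw [← eV.finrank_eq, ← hdim]
  -- the key surjectivity
  have hTinj : Function.Injective (Tmap ω lam0 V) := by
    rw [injective_iff_map_eq_zero]
    intro a ha
    have hVa : ∀ v ∈ V, ω v (a : X) = 0 := by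
      intro v hv
      have := LinearMap.ext_iff.1 ha ⟨v, hv⟩
      simpa using this
    have hall : ∀ x : X, ω x (a : X) = 0 := by
      intro x
      rcases hsplit x with ⟨v, hv, w, hw, rfl⟩
      rw [map_add, LinearMap.add_apply, hVa v hv, hpair (a : X) a.2 w hw, add_zero]
    have : (a : X) = 0 := hnd _ fun y => flip (hall y)
    exact Subtype.ext this
  have hfr : Module.finrank ℝ ↥lam0 = Module.finrank ℝ (Module.Dual ℂ ↥V) := by
    rw [finrank_real_of_complex, finrank_real_of_complex, Subspace.dual_finrank_eq, hfrV]
  have hTsurj : Function.Surjective (Tmap ω lam0 V) :=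
    (LinearMap.injective_iff_surjective_of_finrank_eq_finrank hfr).1 hTinj
  have hsurj : ∀ y : X, ∃ a ∈ lam0, ∀ v ∈ V, ω v y = ω v a := by
    intro y
    obtain ⟨a, ha⟩ := hTsurj (toDual ω V y)
    refine ⟨a, a.2, fun v hv => ?_⟩
    have := LinearMap.ext_iff.1 ha ⟨v, hv⟩
    simpa using this.symm
  -- IsCompl (ann ω V) lam0
  have hdis : ann ω V ⊓ lam0 = ⊥ := by
    rw [eq_bot_iff]
    rintro y hy
    rcases Submodule.mem_inf.1 hy with ⟨h1, h2⟩
    have hall : ∀ x : X, ω x y = 0 := by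
      intro x
      rcases hsplit x with ⟨v, hv, w, hw, rfl⟩
      rw [map_add, LinearMap.add_apply, (mem_ann ω).1 h1 v hv, hpair y h2 w hw, add_zero]
    have : y = 0 := hnd _ fun z => flip (hall z)
    simp [this]
  have hcodis : ann ω V ⊔ lam0 = ⊤ := by
    rw [eq_top_iff]
    intro x _
    obtain ⟨a, ha, hax⟩ := hsurj x
    have hxa : x - a ∈ ann ω V := by
      refine (mem_ann ω).2 fun v hv => ?_
      rw [map_sub, hax v hv, sub_self]
    exact Submodule.mem_sup.2 ⟨x - a, hxa, a, ha, by abel⟩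
  have hG1 : IsCompl (ann ω V) lam0 := ⟨disjoint_iff.2 hdis, codisjoint_iff.2 hcodis⟩
  -- lam0 ⊓ V = ⊥
  have hG2 : lam0 ⊓ V = ⊥ := by
    rw [eq_bot_iff]
    rintro y hy
    rcases Submodule.mem_inf.1 hy with ⟨h1, h2⟩
    have : y ∈ V ⊓ (l ⊔ m) := Submodule.mem_inf.2 ⟨h2, hl0lm h1⟩
    rwa [hV.disjoint.eq_bot] at this
  -- decomposition of coisotropic-like subspaces
  have hdecomp : ∀ p : Submodule ℂ X, lam0 ≤ p → p = lam0 ⊔ (ann ω V ⊓ p) := by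
    intro p hp
    apply le_antisymm
    · intro x hx
      have hx' : x ∈ ann ω V ⊔ lam0 := by rw [hcodis]; exact Submodule.mem_top
      rcases Submodule.mem_sup.1 hx' with ⟨u, hu, a, ha, h⟩
      have hup : u ∈ p := by
        have : u = x - a := by rw [← h]; abel
        rw [this]
        exact Submodule.sub_mem p hx (hp ha)
      refine Submodule.mem_sup.2 ⟨a, ha, u, Submodule.mem_inf.2 ⟨hu, hup⟩, by rw [← h]; abel⟩
    · exact sup_le hp inf_le_right
  have hG3 : l = lam0 ⊔ lam1 := by rw [hlam1]; exact hdecomp l hl0l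
  have hl0m : lam0 ≤ m := hlam0 ▸ inf_le_right.trans hmco
  have hG4 : m = lam0 ⊔ mu1 := by rw [hmu1]; exact hdecomp m hl0m
  have hG3' : lam0 ⊓ lam1 = ⊥ := by
    rw [hlam1, eq_bot_iff]
    rintro y hy
    rcases Submodule.mem_inf.1 hy with ⟨h1, h2⟩
    have : y ∈ ann ω V ⊓ lam0 := Submodule.mem_inf.2 ⟨(Submodule.mem_inf.1 h2).1, h1⟩
    rwa [hdis] at this
  have hG4' : lam0 ⊓ mu1 = ⊥ := by
    rw [hmu1, eq_bot_iff]
    rintro y hy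
    rcases Submodule.mem_inf.1 hy with ⟨h1, h2⟩
    have : y ∈ ann ω V ⊓ lam0 := Submodule.mem_inf.2 ⟨(Submodule.mem_inf.1 h2).1, h1⟩
    rwa [hdis] at this
  -- X₁ = ann V ⊓ (l ⊔ m)
  have hG6 : X₁ = ann ω V ⊓ (l ⊔ m) := by
    rw [hX1]
    apply le_antisymm
    · apply sup_le
      · rw [hlam1]; exact le_inf inf_le_left (inf_le_right.trans le_sup_left)
      · rw [hmu1]; exact le_inf inf_le_left (inf_le_right.trans le_sup_right)
    · intro x hx
      rcases Submodule.mem_inf.1 hx with ⟨hxV, hxlm⟩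
      rcases Submodule.mem_sup.1 hxlm with ⟨p, hp, q, hq, hpq⟩
      rw [hG3] at hp
      rw [hG4] at hq
      rcases Submodule.mem_sup.1 hp with ⟨a0, ha0, a1, ha1, ha⟩
      rcases Submodule.mem_sup.1 hq with ⟨b0, hb0, b1, hb1, hb⟩
      have hs : a0 + b0 = x - (a1 + b1) := by rw [← hpq, ← ha, ← hb]; abel
      have hX1V : a1 + b1 ∈ ann ω V :=
        Submodule.add_mem _ ((hlam1 ▸ ha1 : a1 ∈ ann ω V ⊓ l)).1
          ((hmu1 ▸ hb1 : b1 ∈ ann ω V ⊓ m)).1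
      have hmem : a0 + b0 ∈ ann ω V ⊓ lam0 := by
        refine Submodule.mem_inf.2 ⟨?_, Submodule.add_mem _ ha0 hb0⟩
        rw [hs]
        exact Submodule.sub_mem _ hxV hX1V
      rw [hdis, Submodule.mem_bot] at hmem
      have : x = a1 + b1 := by
        have h' : x - (a1 + b1) = 0 := by rw [← hs, hmem]
        exact sub_eq_zero.1 h'
      rw [this]
      exact Submodule.mem_sup.2 ⟨a1, ha1, b1, hb1, rfl⟩
  -- ann lam0 = l ⊔ m
  have hannlam0 : ann ω lam0 = l ⊔ m := by
    apply le_antisymm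
    · intro y hy
      rcases hsplit y with ⟨v, hv, w, hw, rfl⟩
      have hvann : v ∈ ann ω lam0 := by
        have : v = (v + w) - w := by abel
        rw [this]
        refine Submodule.sub_mem _ hy ((mem_ann ω).2 fun a ha => hpair' a ha w hw)
      have hv0 : (⟨v, hv⟩ : ↥V) = 0 := by
        rw [← Module.forall_dual_apply_eq_zero_iff ℂ]
        intro φ
        obtain ⟨a, ha⟩ := hTsurj φ
        have : φ ⟨v, hv⟩ = ω v (a : X) := by rw [← ha]; rfl
        rw [this, hskew, (mem_ann ω).1 hvann (a : X) a.2, map_zero, neg_zero]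
      have : v = 0 := congrArg Subtype.val hv0
      rw [this, zero_add]
      exact hw
    · intro w hw
      exact (mem_ann ω).2 fun a ha => hpair' a ha w hw
  -- X₁ = ann X₀
  have hG5 : X₁ = ann ω X₀ := by
    rw [hX0, ann_sup, hannlam0, hG6, inf_comm]
  -- l ⊔ m = lam0 ⊔ X₁
  have hlmeq : l ⊔ m = lam0 ⊔ X₁ := by
    rw [hX1, hG3, hG4, sup_sup_sup_comm, sup_idem]
  have hX1lm : X₁ ≤ l ⊔ m := hG6 ▸ inf_le_right
  have hX1V : X₁ ≤ ann ω V := hG6 ▸ inf_le_left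
  -- X₀ = ann X₁
  have hVle : V ≤ ann ω X₁ := by
    intro v hv
    refine (mem_ann ω).2 fun x hx => ?_
    exact flip ((mem_ann ω).1 (hX1V hx) v hv)
  have hlam0le : lam0 ≤ ann ω X₁ := by
    intro a ha
    exact (mem_ann ω).2 fun x hx => hpair a ha x (hX1lm hx)
  have hG7 : X₀ = ann ω X₁ := by
    rw [hX0]
    apply le_antisymm (sup_le hlam0le hVle)
    intro y hy
    rcases hsplit y with ⟨v, hv, w, hw, rfl⟩
    have hwann : w ∈ ann ω X₁ := by
      have : w = (v + w) - v := by abel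
      rw [this]
      exact Submodule.sub_mem _ hy (hVle hv)
    have hwlam0 : w ∈ lam0 := by
      rw [h0]
      refine (mem_ann ω).2 fun z hz => ?_
      rw [hlmeq] at hz
      rcases Submodule.mem_sup.1 hz with ⟨z0, hz0, z1, hz1, rfl⟩
      rw [map_add, LinearMap.add_apply, hpair' z0 hz0 w hw, (mem_ann ω).1 hwann z1 hz1,
        add_zero]
    exact Submodule.add_mem _ (Submodule.mem_sup_right hv) (Submodule.mem_sup_left hwlam0)
  -- IsCompl X₀ X₁
  have hsup01 : X₀ ⊔ X₁ = ⊤ := by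
    rw [hX0, sup_comm lam0 V, sup_assoc, ← hlmeq, hV.sup_eq_top]
  have hinf01 : X₀ ⊓ X₁ = ⊥ := by
    rw [eq_bot_iff]
    rintro x hx
    rcases Submodule.mem_inf.1 hx with ⟨hx0, hx1⟩
    rw [hX0] at hx0
    rcases Submodule.mem_sup.1 hx0 with ⟨a, ha, v, hv, hav⟩
    have hvmem : v ∈ V ⊓ (l ⊔ m) := by
      refine Submodule.mem_inf.2 ⟨hv, ?_⟩
      have : v = x - a := by rw [← hav]; abel
      rw [this]
      exact Submodule.sub_mem _ (hX1lm hx1) (hl0lm ha)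
    rw [hV.disjoint.eq_bot, Submodule.mem_bot] at hvmem
    have hxa : x = a := by rw [← hav, hvmem, add_zero]
    have : x ∈ ann ω V ⊓ lam0 := Submodule.mem_inf.2 ⟨hX1V hx1, hxa ▸ ha⟩
    rwa [hdis] at this
  have hG8 : IsCompl X₀ X₁ := ⟨disjoint_iff.2 hinf01, codisjoint_iff.2 hsup01⟩
  -- Lagrangian part
  have hG11a : lam0 ≤ X₀ := hX0 ▸ le_sup_left
  have hG11b : lam0 = ann ω lam0 ⊓ X₀ := by
    rw [hannlam0, hX0]
    apply le_antisymm (le_inf hl0lm le_sup_left)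
    intro x hx
    rcases Submodule.mem_inf.1 hx with ⟨hxlm, hx0⟩
    rcases Submodule.mem_sup.1 hx0 with ⟨a, ha, v, hv, hav⟩
    have hvmem : v ∈ V ⊓ (l ⊔ m) := by
      refine Submodule.mem_inf.2 ⟨hv, ?_⟩
      have : v = x - a := by rw [← hav]; abel
      rw [this]
      exact Submodule.sub_mem _ hxlm (hl0lm ha)
    rw [hV.disjoint.eq_bot, Submodule.mem_bot] at hvmem
    have : x = a := by rw [← hav, hvmem, add_zero]
    rw [this]; exact ha
  refine ⟨hG1, hG2, ⟨hG3, hG3'⟩, ⟨hG4, hG4'⟩, hG5, hG6, hG7, hG8, ?_, ?_, hG11a, hG11b⟩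
  · rw [← hG5]; exact hinf01
  · rw [← hG7, inf_comm]; exact hinf01
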